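/- arXiv:2405.07126 — 2 statements merged into one kernel-verified Lean document; each statement's English description precedes it below -/
import Mathlib

section
/- (Jacobi triple product specialization used in the proof of Lemma 9.) Let s be a positive integer and let i ∈ {1, …, s}. In ℚ[[q]] one has the identity Σ_{k ∈ ℤ} (−1)^k q^{(2s+1)k(k+1)/2 − ki} = Π_{n ≥ 1, n ≡ 0 or ±i (mod 2s+1)} (1 − q^n). Here the bilateral sum is a summable family of power series (the exponent (2s+1)k(k+1)/2 − ki is a nonnegative integer for every k ∈ ℤ and tends to infinity as |k| → ∞), and the right-hand side is a convergent infinite product of power series with constant term 1. Equivalently, Π_{n ≥ 1, n ≢ 0, ±i (mod 2s+1)} (1 − q^n)^{−1} = (Π_{j ≥ 1}(1 − q^j))^{−1} · Σ_{k ∈ ℤ} (−1)^k q^{(2s+1)k(k+1)/2 − ki}. -/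
/-!
The identity is the limit of Cauchy's finite form of Jacobi's triple product. The `q`-binomial
theorem `∏_{j<2m} (x - q^j) = ∑_r (-1)^r [2m, r]_q q^(r(r-1)/2) x^(2m-r)` at `x = q^(m-1) z`,
with `z w = q`, gives

  `∏_{t<m} (1 - q^t z) (1 - q^t w) (q; q)_m
      = ∑_{|k| ≤ m} (-1)^k [2m, m+k]_q (q; q)_m q^(k(k+1)/2) z^(-k)`.

For `q = X^(2s+1)`, `z = X^i`, `w = X^(2s+1-i)` the left side is the product of the selected
factors `1 - X^n`, `n ≤ (2s+1) m`, and `q^(k(k+1)/2) z^(-k) = X^(expo s i k)`. As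
`[2m, m+k]_q (q; q)_m ≡ 1` modulo `X^(m-|k|+1)` and `expo s i k ≥ |k|`, the right side agrees with
the bilateral series modulo `X^(n+1)` once `m > 2n`. The second form follows on dividing by
Euler's product, whose limit is `pentagonalSeries`.
-/

/-- Coefficientwise summability of a family of formal power series. -/
def PSHasSum {α : Type*} (f : α → PowerSeries ℚ) (S : PowerSeries ℚ) : Prop :=
  ∀ n : ℕ, (Function.support fun a => PowerSeries.coeff (R := ℚ) n (f a)).Finite ∧
    ∑ᶠ a, PowerSeries.coeff (R := ℚ) n (f a) = PowerSeries.coeff (R := ℚ) n S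

/-- Coefficientwise convergence of an infinite product of formal power series. -/
def PSHasProd (f : ℕ → PowerSeries ℚ) (S : PowerSeries ℚ) : Prop :=
  ∀ n : ℕ, ∀ᶠ N in Filter.atTop,
    PowerSeries.coeff (R := ℚ) n (∏ j ∈ Finset.range N, f j) = PowerSeries.coeff (R := ℚ) n S

/-- The exponent `(2s+1)k(k+1)/2 − ki`. -/
def expo (s i : ℕ) (k : ℤ) : ℤ :=
  (2 * (s : ℤ) + 1) * (k * (k + 1) / 2) - k * i

open Finset PowerSeries Filter

section QBinomial

variable {R : Type*} [CommRing R] (q : R)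

def qBinomial : ℕ → ℕ → R
  | _, 0 => 1
  | 0, _ + 1 => 0
  | n + 1, r + 1 => qBinomial n (r + 1) + q ^ (n - r) * qBinomial n r

def qPochhammer (n : ℕ) : R := ∏ j ∈ range n, (1 - q ^ (j + 1))

@[simp] lemma qBinomial_zero_right (n : ℕ) : qBinomial q n 0 = 1 := by cases n <;> rfl

lemma qBinomial_succ_succ (n r : ℕ) :
    qBinomial q (n + 1) (r + 1) = qBinomial q n (r + 1) + q ^ (n - r) * qBinomial q n r := rfl

lemma qBinomial_eq_zero_of_lt {n r : ℕ} (h : n < r) : qBinomial q n r = 0 := by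
  induction n generalizing r with
  | zero => obtain ⟨r, rfl⟩ := Nat.exists_eq_add_one_of_ne_zero h.ne'; rfl
  | succ n ih =>
    obtain ⟨r, rfl⟩ := Nat.exists_eq_add_one_of_ne_zero (by omega : r ≠ 0)
    rw [qBinomial_succ_succ, ih (by omega), ih (by omega), mul_zero, add_zero]

@[simp] lemma qBinomial_self (n : ℕ) : qBinomial q n n = 1 := by
  induction n with
  | zero => rfl
  | succ n ih => rw [qBinomial_succ_succ, qBinomial_eq_zero_of_lt q (by omega), ih]; simp

lemma qPochhammer_mul_prod_Ico {a b : ℕ} (h : a ≤ b) :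
    qPochhammer q a * ∏ j ∈ Ico a b, (1 - q ^ (j + 1)) = qPochhammer q b :=
  prod_range_mul_prod_Ico _ h

lemma qPochhammer_succ (n : ℕ) : qPochhammer q (n + 1) = qPochhammer q n * (1 - q ^ (n + 1)) :=
  prod_range_succ _ _

theorem qBinomial_mul_qPochhammer_mul_qPochhammer {n r : ℕ} (h : r ≤ n) :
    qBinomial q n r * qPochhammer q r * qPochhammer q (n - r) = qPochhammer q n := by
  induction n generalizing r with
  | zero =>
    obtain rfl : r = 0 := by omega
    simp [qPochhammer]
  | succ n ih =>
    obtain _ | t := r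
    · simp [qPochhammer]
    obtain rfl | htn := eq_or_lt_of_le (Nat.le_of_succ_le_succ h)
    · simp [qPochhammer]
    obtain ⟨d, rfl⟩ := Nat.exists_eq_add_of_lt htn
    have h₁ := ih (r := t + 1) (by omega)
    have h₂ := ih (r := t) (by omega)
    rw [show t + d + 1 - (t + 1) = d by omega] at h₁
    rw [show t + d + 1 - t = d + 1 by omega] at h₂
    rw [show t + d + 1 + 1 - (t + 1) = d + 1 by omega, qBinomial_succ_succ,
      show t + d + 1 - t = d + 1 by omega]
    simp only [qPochhammer_succ] at h₁ h₂ ⊢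
    linear_combination (1 - q ^ (d + 1)) * h₁ + q ^ (d + 1) * (1 - q ^ (t + 1)) * h₂

theorem prod_range_sub_pow_eq_sum_qBinomial (x : R) (n : ℕ) :
    ∏ j ∈ range n, (x - q ^ j) =
      ∑ r ∈ range (n + 1), (-1) ^ r * qBinomial q n r * q ^ r.choose 2 * x ^ (n - r) := by
  induction n with
  | zero => simp
  | succ n ih =>
    set B := ∑ r ∈ range (n + 1), (-1) ^ r * qBinomial q n r * q ^ r.choose 2 * x ^ (n - r)
    set c : ℕ → R := fun t ↦
      (-1) ^ (t + 1) * qBinomial q n (t + 1) * q ^ (t + 1).choose 2 * x ^ (n - t)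
    have hxB : x * B = x ^ (n + 1) + ∑ t ∈ range (n + 1), c t := by
      calc x * B = ∑ r ∈ range (n + 2),
            (-1) ^ r * qBinomial q n r * q ^ r.choose 2 * x ^ (n + 1 - r) := by
            rw [sum_range_succ, qBinomial_eq_zero_of_lt q (Nat.lt_succ_self n), mul_sum]
            simp only [mul_zero, zero_mul, add_zero]
            refine sum_congr rfl fun r hr ↦ ?_
            rw [Nat.sub_add_comm (Nat.lt_succ_iff.mp (mem_range.mp hr)), pow_succ]
            ring
        _ = x ^ (n + 1) + ∑ t ∈ range (n + 1), c t := by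
            rw [sum_range_succ', add_comm]
            simp [c]
    have hstep : ∀ t ∈ range (n + 1),
        (-1) ^ (t + 1) * qBinomial q (n + 1) (t + 1) * q ^ (t + 1).choose 2 * x ^ (n + 1 - (t + 1))
          = c t - q ^ n * ((-1) ^ t * qBinomial q n t * q ^ t.choose 2 * x ^ (n - t)) := by
      intro t ht
      have hpow : q ^ (n - t) * q ^ (t + 1).choose 2 = q ^ n * q ^ t.choose 2 := by
        have hchoose : (t + 1).choose 2 = t + t.choose 2 := by
          rw [Nat.choose_succ_succ', Nat.choose_one_right]
        rw [← pow_add, ← pow_add, hchoose]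
        congr 1
        have := Nat.lt_succ_iff.mp (mem_range.mp ht)
        omega
      rw [qBinomial_succ_succ, Nat.add_sub_add_right]
      linear_combination (-1) ^ (t + 1) * qBinomial q n t * x ^ (n - t) * hpow
    rw [prod_range_succ, ih, sum_range_succ', sum_congr rfl hstep, sum_sub_distrib, ← mul_sum]
    simp only [pow_zero, one_mul, qBinomial_zero_right, Nat.choose_zero_succ, Nat.sub_zero]
    linear_combination hxB

/-- The finite triple product
`∏_{t<m} (1 - q^t z) (1 - q^t w) = ∑_{|k| ≤ m} (-1)^k [2m, m+k]_q q^(k(k+1)/2) z^(-k)` (`z w = q`),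
multiplied by `(-1)^m q^(m(m-1)/2) (q^(m-1) z)^m` so that no inverse of `z` or `q` is needed. -/
theorem jacobi_triple_product_finite {z w : R} (hzw : z * w = q) (m : ℕ) :
    (-1) ^ m * q ^ m.choose 2 * (q ^ (m - 1) * z) ^ m *
        ∏ t ∈ range m, ((1 - q ^ t * z) * (1 - q ^ t * w)) =
      ∑ r ∈ range (2 * m + 1),
        (-1) ^ r * qBinomial q (2 * m) r * q ^ r.choose 2 * (q ^ (m - 1) * z) ^ (2 * m - r) := by
  set x := q ^ (m - 1) * z
  have hlow : ∏ j ∈ range m, (x - q ^ j) =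
      (-1) ^ m * q ^ m.choose 2 * ∏ t ∈ range m, (1 - q ^ t * z) := by
    have hfactor : ∀ j ∈ range m, x - q ^ j = -1 * q ^ j * (1 - q ^ (m - 1 - j) * z) := by
      intro j hj
      have hsplit : q ^ (m - 1) = q ^ j * q ^ (m - 1 - j) := by
        rw [← pow_add]; congr 1; have := mem_range.mp hj; omega
      simp only [x, hsplit]; ring
    rw [prod_congr rfl hfactor, prod_mul_distrib, prod_mul_distrib, prod_const, card_range,
      prod_pow_eq_pow_sum, sum_range_id, ← Nat.choose_two_right,
      prod_range_reflect (fun t ↦ 1 - q ^ t * z)]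
  have hhigh : ∏ t ∈ range m, (x - q ^ (m + t)) = x ^ m * ∏ t ∈ range m, (1 - q ^ t * w) := by
    have hfactor : ∀ t ∈ range m, x - q ^ (m + t) = x * (1 - q ^ t * w) := by
      intro t ht
      have hpow : q ^ (m + t) = q ^ (m - 1) * q ^ t * q := by
        rw [← pow_add, ← pow_succ]; congr 1; have := mem_range.mp ht; omega
      simp only [x, hpow]
      linear_combination q ^ (m - 1) * q ^ t * hzw
    rw [prod_congr rfl hfactor, prod_mul_distrib, prod_const, card_range]
  rw [← prod_range_sub_pow_eq_sum_qBinomial, two_mul, prod_range_add, hlow, hhigh,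
    prod_mul_distrib]
  ring

end QBinomial


lemma dvd_prod_sub_one {R ι : Type*} [CommRing R] {a : R} {s : Finset ι} {f : ι → R}
    (h : ∀ j ∈ s, a ∣ f j - 1) : a ∣ ∏ j ∈ s, f j - 1 := by
  simp_rw [← Ideal.mem_span_singleton, ← Ideal.Quotient.eq, map_one] at h ⊢
  rw [map_prod]
  exact prod_eq_one h

section Exponent

variable {s i : ℕ}

lemma two_mul_expo (k : ℤ) : 2 * expo s i k = (2 * s + 1) * (k * (k + 1)) - 2 * k * i := by
  have h := Int.mul_ediv_cancel' (Int.even_mul_succ_self k).two_dvd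
  rw [expo]
  linear_combination (2 * (s : ℤ) + 1) * h

lemma abs_le_expo (hi₁ : 1 ≤ i) (hi₂ : i ≤ 2 * s) (k : ℤ) : |k| ≤ expo s i k := by
  have h := two_mul_expo (s := s) (i := i) k
  have hi₁' : (1 : ℤ) ≤ i := by exact_mod_cast hi₁
  have hi₂' : (i : ℤ) ≤ 2 * s := by exact_mod_cast hi₂
  rcases lt_trichotomy k 0 with hk | rfl | hk
  · have h₁ : 0 ≤ k * (k + 1) * (2 * s + 1) :=
      mul_nonneg (mul_nonneg_of_nonpos_of_nonpos hk.le (by omega)) (by positivity)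
    have h₂ : 0 ≤ -k * (i - 1) := mul_nonneg (by omega) (by omega)
    rw [abs_of_neg hk]
    linarith
  · simp [expo]
  · have h₁ : 0 ≤ k * (k - 1) * (2 * s + 1) :=
      mul_nonneg (mul_nonneg hk.le (by omega)) (by positivity)
    have h₂ : 0 ≤ k * (2 * s - i) := mul_nonneg hk.le (by omega)
    rw [abs_of_pos hk]
    linarith

lemma expo_nonneg (hi₁ : 1 ≤ i) (hi₂ : i ≤ 2 * s) (k : ℤ) : 0 ≤ expo s i k :=
  (abs_nonneg k).trans (abs_le_expo hi₁ hi₂ k)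

end Exponent

section PowerSeries

variable {R : Type*} [CommRing R] {q : R⟦X⟧}

lemma X_pow_dvd_one_sub_pow_sub_one (hq : X ∣ q) {a j : ℕ} (h : a ≤ j) :
    X ^ (a + 1) ∣ (1 - q ^ (j + 1)) - 1 := by
  rw [sub_sub_cancel_left, dvd_neg]
  exact (pow_dvd_pow X (by omega)).trans (pow_dvd_pow_of_dvd hq _)

lemma isUnit_qPochhammer (hq : X ∣ q) (n : ℕ) : IsUnit (qPochhammer q n) := by
  rw [isUnit_iff_constantCoeff, qPochhammer, map_prod]
  simp [X_dvd_iff.mp hq]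

theorem X_pow_dvd_qBinomial_mul_qPochhammer_sub_one (hq : X ∣ q) {n r b : ℕ} (hr : r ≤ n)
    (hb₁ : min r (n - r) ≤ b) (hb₂ : b + min r (n - r) ≤ n) :
    X ^ (min r (n - r) + 1) ∣ qBinomial q n r * qPochhammer q b - 1 := by
  set a := min r (n - r)
  have hsymm :
      qPochhammer q r * qPochhammer q (n - r) = qPochhammer q a * qPochhammer q (n - a) := by
    rcases le_total r (n - r) with h | h
    · rw [show a = r from min_eq_left h]
    · rw [show a = n - r from min_eq_right h, Nat.sub_sub_self hr, mul_comm]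
  set P₁ := ∏ j ∈ Ico b (n - a), (1 - q ^ (j + 1))
  set P₂ := ∏ j ∈ Ico a n, (1 - q ^ (j + 1))
  have hkey : qBinomial q n r * qPochhammer q b * P₁ = P₂ := by
    refine (isUnit_qPochhammer hq a).mul_left_cancel ?_
    have := qBinomial_mul_qPochhammer_mul_qPochhammer q hr
    rw [mul_assoc, hsymm, ← qPochhammer_mul_prod_Ico q (show b ≤ n - a by omega),
      ← qPochhammer_mul_prod_Ico q (show a ≤ n by omega)] at this
    linear_combination this
  have hP₁ : X ^ (a + 1) ∣ P₁ - 1 := dvd_prod_sub_one fun j hj ↦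
    X_pow_dvd_one_sub_pow_sub_one hq (by have := (mem_Ico.mp hj).1; omega)
  have hP₂ : X ^ (a + 1) ∣ P₂ - 1 :=
    dvd_prod_sub_one fun j hj ↦ X_pow_dvd_one_sub_pow_sub_one hq (mem_Ico.mp hj).1
  rw [show qBinomial q n r * qPochhammer q b - 1 =
      (P₂ - 1) - qBinomial q n r * qPochhammer q b * (P₁ - 1) by rw [← hkey]; ring]
  exact dvd_sub hP₂ (dvd_mul_of_dvd_right hP₁ _)

lemma coeff_eq_of_X_pow_dvd_sub {φ ψ : R⟦X⟧} {n : ℕ} (h : X ^ (n + 1) ∣ φ - ψ) :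
    coeff n φ = coeff n ψ :=
  sub_eq_zero.mp (by simpa using X_pow_dvd_iff.mp h n (Nat.lt_succ_self n))

lemma pow_choose_two_mul_pow_eq_mul_X_pow_expo {s i m r : ℕ} (hi₁ : 1 ≤ i) (hi₂ : i ≤ 2 * s)
    (hm : 0 < m) (hr : r ≤ 2 * m) :
    (X ^ (2 * s + 1)) ^ r.choose 2 * ((X ^ (2 * s + 1)) ^ (m - 1) * X ^ i) ^ (2 * m - r) =
      (X ^ (2 * s + 1) : R⟦X⟧) ^ m.choose 2 * ((X ^ (2 * s + 1)) ^ (m - 1) * X ^ i) ^ m *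
        X ^ (expo s i (r - m)).toNat := by
  simp only [← pow_mul, ← pow_add]
  congr 1
  have hE : (2 * expo s i (r - m) : ℚ) =
      (2 * s + 1) * ((r - m) * (r - m + 1)) - 2 * (r - m) * i := by
    exact_mod_cast two_mul_expo (s := s) (i := i) (r - m)
  have htoNat : ((expo s i (r - m)).toNat : ℚ) = expo s i (r - m) := by
    exact_mod_cast Int.toNat_of_nonneg (expo_nonneg hi₁ hi₂ _)
  rw [← Nat.cast_inj (R := ℚ)]
  push_cast [Nat.cast_sub hr, Nat.cast_sub hm, Nat.cast_choose_two, htoNat]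
  linear_combination (-1 / 2 : ℚ) * hE

end PowerSeries

section Products

lemma psHasProd_iff_eventually_X_pow_dvd {f : ℕ → ℚ⟦X⟧} {P : ℚ⟦X⟧} :
    PSHasProd f P ↔ ∀ n, ∀ᶠ M in atTop, X ^ (n + 1) ∣ ∏ j ∈ range M, f j - P := by
  refine ⟨fun h n ↦ ?_, fun h n ↦ (h n).mono fun M ↦ coeff_eq_of_X_pow_dvd_sub⟩
  filter_upwards [(eventually_all_finset (range (n + 1))).mpr fun j _ ↦ h j] with M hM
  exact X_pow_dvd_iff.mpr fun j hj ↦ by rw [map_sub, hM j (mem_range.mpr hj), sub_self]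

lemma PSHasProd.of_exists_X_pow_dvd {f : ℕ → ℚ⟦X⟧} {P : ℚ⟦X⟧}
    (hf : ∀ j, X ^ (j + 1) ∣ f j - 1)
    (h : ∀ n, ∃ M, n ≤ M ∧ X ^ (n + 1) ∣ ∏ j ∈ range M, f j - P) : PSHasProd f P := by
  refine psHasProd_iff_eventually_X_pow_dvd.mpr fun n ↦ ?_
  obtain ⟨M, hnM, hM⟩ := h n
  filter_upwards [eventually_ge_atTop M] with M' hM'
  have htail : X ^ (n + 1) ∣ ∏ j ∈ Ico M M', f j - 1 :=
    dvd_prod_sub_one fun j hj ↦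
      (pow_dvd_pow X (by have := (mem_Ico.mp hj).1; omega)).trans (hf j)
  rw [← prod_range_mul_prod_Ico f hM']
  have : (∏ j ∈ range M, f j) * ∏ j ∈ Ico M M', f j - P =
      (∏ j ∈ range M, f j) * (∏ j ∈ Ico M M', f j - 1) + (∏ j ∈ range M, f j - P) := by ring
  rw [this]
  exact dvd_add (dvd_mul_of_dvd_right htail _) hM

lemma PSHasProd.of_mul {f g : ℕ → ℚ⟦X⟧} {A B : ℚ⟦X⟧} (hf : PSHasProd f A)
    (hfg : PSHasProd (fun j ↦ f j * g j) B) (hA : constantCoeff A ≠ 0) :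
    PSHasProd g (A⁻¹ * B) := by
  rw [psHasProd_iff_eventually_X_pow_dvd] at hf hfg ⊢
  intro n
  filter_upwards [hf n, hfg n] with M hfM hfgM
  rw [prod_mul_distrib] at hfgM
  have : ∏ j ∈ range M, g j - A⁻¹ * B = A⁻¹ * (((∏ j ∈ range M, f j) * ∏ j ∈ range M, g j - B)
      - (∏ j ∈ range M, f j - A) * ∏ j ∈ range M, g j) := by
    linear_combination (-∏ j ∈ range M, g j) * PowerSeries.inv_mul_cancel A hA
  rw [this]
  exact dvd_mul_of_dvd_right (dvd_sub hfgM (dvd_mul_of_dvd_left hfM _)) _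

lemma PSHasSum.X_pow_dvd_sum_sub {α : Type*} {f : α → ℚ⟦X⟧} {S : ℚ⟦X⟧} (hS : PSHasSum f S)
    {n : ℕ} {s : Finset α} (hs : ∀ j ≤ n, ∀ a, coeff j (f a) ≠ 0 → a ∈ s) :
    X ^ (n + 1) ∣ ∑ a ∈ s, f a - S := by
  refine X_pow_dvd_iff.mpr fun j hj ↦ ?_
  rw [map_sub, map_sum, ← (hS j).2, finsum_eq_sum_of_support_subset _
    fun a ha ↦ hs j (Nat.lt_succ_iff.mp hj) a ha, sub_self]

lemma psHasProd_one_sub_X_pow : PSHasProd (fun j ↦ 1 - X ^ (j + 1)) (pentagonalSeries ℚ) :=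
  fun n ↦ tendsto_finset_range.eventually (coeff_prod_one_sub_X_pow_eventually_eq ℚ n)

end Products

noncomputable def jacobiTerm (s i : ℕ) (k : ℤ) : ℚ⟦X⟧ := C ((-1 : ℚ) ^ k) * X ^ (expo s i k).toNat

noncomputable def jacobiSeries (s i : ℕ) : ℚ⟦X⟧ := mk fun n ↦ ∑ᶠ k, coeff n (jacobiTerm s i k)

noncomputable def jacobiFactor (s i n : ℕ) : ℚ⟦X⟧ :=
  if (n + 1) % (2 * s + 1) = 0 ∨ (n + 1) % (2 * s + 1) = i ∨
      ((n + 1) + i) % (2 * s + 1) = 0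
  then 1 - X ^ (n + 1) else 1

section Jacobi

variable {s i : ℕ}

lemma abs_le_of_coeff_jacobiTerm_ne_zero (hi₁ : 1 ≤ i) (hi₂ : i ≤ 2 * s) {n : ℕ} {k : ℤ}
    (h : coeff n (jacobiTerm s i k) ≠ 0) : |k| ≤ n := by
  rw [jacobiTerm, coeff_C_mul_X_pow] at h
  split_ifs at h with hn
  · have := abs_le.mp (abs_le_expo hi₁ hi₂ k)
    rw [abs_le]
    omega
  · exact absurd rfl h

lemma psHasSum_jacobiTerm (hi₁ : 1 ≤ i) (hi₂ : i ≤ 2 * s) :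
    PSHasSum (jacobiTerm s i) (jacobiSeries s i) := fun n ↦
  ⟨(Set.finite_Icc (-n : ℤ) n).subset fun _ hk ↦
      abs_le.mp (abs_le_of_coeff_jacobiTerm_ne_zero hi₁ hi₂ hk),
    by rw [jacobiSeries, coeff_mk]⟩

lemma X_pow_dvd_sum_jacobiTerm_sub (hi₁ : 1 ≤ i) (hi₂ : i ≤ 2 * s) {n m : ℕ} (hn : n ≤ m) :
    X ^ (n + 1) ∣ ∑ r ∈ range (2 * m + 1), jacobiTerm s i (r - m) - jacobiSeries s i := by
  rw [← sum_image (g := fun r : ℕ ↦ (r : ℤ) - m) fun _ _ _ _ h ↦ by simpa using h]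
  refine (psHasSum_jacobiTerm hi₁ hi₂).X_pow_dvd_sum_sub fun j hj k hk ↦ mem_image.mpr ?_
  have := abs_le.mp (abs_le_of_coeff_jacobiTerm_ne_zero hi₁ hi₂ hk)
  exact ⟨(k + m).toNat, mem_range.mpr (by omega), by omega⟩

lemma jacobiFactor_condition_iff (hi₁ : 1 ≤ i) (hi₂ : i ≤ 2 * s) (t : ℕ) {r : ℕ}
    (hr : r < 2 * s + 1) :
    (((2 * s + 1) * t + r + 1) % (2 * s + 1) = 0 ∨ ((2 * s + 1) * t + r + 1) % (2 * s + 1) = i ∨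
        ((2 * s + 1) * t + r + 1 + i) % (2 * s + 1) = 0) ↔
      r = i - 1 ∨ r = 2 * s - i ∨ r = 2 * s := by
  rw [add_assoc, add_assoc, Nat.mul_add_mod, Nat.mul_add_mod]
  rcases (show r + 1 ≤ 2 * s + 1 from hr).eq_or_lt with hr' | hr'
  · rw [hr', Nat.mod_self, Nat.add_mod_left, Nat.mod_eq_of_lt (by omega)]
    omega
  rw [Nat.mod_eq_of_lt hr']
  rcases lt_or_ge (r + 1 + i) (2 * s + 1) with h | h
  · rw [Nat.mod_eq_of_lt h]
    omega
  · rw [Nat.mod_eq_sub_mod h, Nat.mod_eq_of_lt (by omega)]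
    omega

lemma prod_range_jacobiFactor_mul_add (hi₁ : 1 ≤ i) (hi₂ : i ≤ 2 * s) (t : ℕ) :
    ∏ r ∈ range (2 * s + 1), jacobiFactor s i ((2 * s + 1) * t + r) =
      (1 - (X ^ (2 * s + 1)) ^ t * X ^ i) * (1 - (X ^ (2 * s + 1)) ^ t * X ^ (2 * s + 1 - i)) *
        (1 - (X ^ (2 * s + 1)) ^ (t + 1)) := by
  have hfactor : ∀ r ∈ range (2 * s + 1), jacobiFactor s i ((2 * s + 1) * t + r) =
      if r = i - 1 ∨ r = 2 * s - i ∨ r = 2 * s then 1 - X ^ ((2 * s + 1) * t + r + 1) else 1 :=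
    fun r hr ↦ if_congr (jacobiFactor_condition_iff hi₁ hi₂ t (mem_range.mp hr)) rfl rfl
  have hfilter : (range (2 * s + 1)).filter (fun r ↦ r = i - 1 ∨ r = 2 * s - i ∨ r = 2 * s) =
      {i - 1, 2 * s - i, 2 * s} := by
    ext r
    simp only [mem_filter, mem_range, mem_insert, mem_singleton]
    omega
  rw [prod_congr rfl hfactor, ← prod_filter, hfilter,
    prod_insert (by simp only [mem_insert, mem_singleton]; omega),
    prod_insert (by simp only [mem_singleton]; omega), prod_singleton, ← pow_mul, ← pow_mul,
    ← pow_add, ← pow_add, show (2 * s + 1) * t + (i - 1) + 1 = (2 * s + 1) * t + i by omega,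
    show (2 * s + 1) * t + (2 * s - i) + 1 = (2 * s + 1) * t + (2 * s + 1 - i) by omega,
    show (2 * s + 1) * t + 2 * s + 1 = (2 * s + 1) * (t + 1) by ring]
  ring

lemma prod_range_jacobiFactor (hi₁ : 1 ≤ i) (hi₂ : i ≤ 2 * s) (m : ℕ) :
    ∏ j ∈ range ((2 * s + 1) * m), jacobiFactor s i j =
      (∏ t ∈ range m, ((1 - (X ^ (2 * s + 1)) ^ t * X ^ i) *
        (1 - (X ^ (2 * s + 1)) ^ t * X ^ (2 * s + 1 - i)))) * qPochhammer (X ^ (2 * s + 1)) m := by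
  induction m with
  | zero => simp [qPochhammer]
  | succ m ih =>
    rw [Nat.mul_succ, prod_range_add, ih, prod_range_jacobiFactor_mul_add hi₁ hi₂,
      prod_range_succ, qPochhammer_succ]
    ring

lemma C_neg_one_zpow_natCast_sub (m r : ℕ) :
    (C ((-1 : ℚ) ^ ((r : ℤ) - m)) : ℚ⟦X⟧) = (-1) ^ m * (-1) ^ r := by
  rw [zpow_sub₀ (by norm_num), zpow_natCast, zpow_natCast, div_eq_mul_inv, ← inv_pow, inv_neg,
    inv_one]
  simp only [map_mul, map_pow, map_neg, map_one]
  ring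

theorem prod_range_jacobiFactor_eq_sum (hi₁ : 1 ≤ i) (hi₂ : i ≤ 2 * s) {m : ℕ} (hm : 0 < m) :
    ∏ j ∈ range ((2 * s + 1) * m), jacobiFactor s i j =
      ∑ r ∈ range (2 * m + 1), jacobiTerm s i (r - m) *
        (qBinomial (X ^ (2 * s + 1)) (2 * m) r * qPochhammer (X ^ (2 * s + 1)) m) := by
  set q : ℚ⟦X⟧ := X ^ (2 * s + 1)
  set P := ∏ t ∈ range m, ((1 - q ^ t * X ^ i) * (1 - q ^ t * X ^ (2 * s + 1 - i)))
  have hfinite : (-1) ^ m * q ^ m.choose 2 * (q ^ (m - 1) * X ^ i) ^ m * P = _ :=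
    jacobi_triple_product_finite q (by rw [← pow_add, Nat.add_sub_cancel' (by omega)]) m
  have hsq : ((-1) ^ m * (-1) ^ m : ℚ⟦X⟧) = 1 := by rw [← mul_pow]; simp
  have hne : q ^ m.choose 2 * (q ^ (m - 1) * X ^ i) ^ m ≠ 0 := by simp [q]
  rw [prod_range_jacobiFactor hi₁ hi₂ m]
  refine mul_left_cancel₀ hne ?_
  calc q ^ m.choose 2 * (q ^ (m - 1) * X ^ i) ^ m * (P * qPochhammer q m)
      = (-1) ^ m * ((-1) ^ m * q ^ m.choose 2 * (q ^ (m - 1) * X ^ i) ^ m * P) *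
          qPochhammer q m := by
        linear_combination
          (-(q ^ m.choose 2 * (q ^ (m - 1) * X ^ i) ^ m * P * qPochhammer q m)) * hsq
    _ = _ := by
        rw [hfinite, mul_sum, sum_mul, mul_sum]
        refine sum_congr rfl fun r hr ↦ ?_
        rw [jacobiTerm, C_neg_one_zpow_natCast_sub]
        linear_combination ((-1) ^ m * (-1) ^ r * qBinomial q (2 * m) r * qPochhammer q m) *
          pow_choose_two_mul_pow_eq_mul_X_pow_expo (R := ℚ) hi₁ hi₂ hm
            (Nat.lt_succ_iff.mp (mem_range.mp hr))

lemma X_pow_dvd_jacobiTerm_mul_sub_one (hi₁ : 1 ≤ i) (hi₂ : i ≤ 2 * s) {n m r : ℕ}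
    (hm : 2 * n ≤ m) (hr : r ≤ 2 * m) :
    X ^ (n + 1) ∣ jacobiTerm s i (r - m) *
      (qBinomial (X ^ (2 * s + 1)) (2 * m) r * qPochhammer (X ^ (2 * s + 1)) m - 1) := by
  by_cases hk : |(r : ℤ) - m| ≤ n
  · rw [abs_le] at hk
    refine dvd_mul_of_dvd_right ((pow_dvd_pow X ?_).trans
      (X_pow_dvd_qBinomial_mul_qPochhammer_sub_one (dvd_pow_self X (by omega)) hr ?_ ?_)) _
    all_goals omega
  · rw [not_le, lt_abs] at hk
    have := abs_le.mp (abs_le_expo hi₁ hi₂ (r - m))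
    exact dvd_mul_of_dvd_left (dvd_mul_of_dvd_right (pow_dvd_pow X (by omega)) _) _

theorem X_pow_dvd_prod_range_jacobiFactor_sub (hi₁ : 1 ≤ i) (hi₂ : i ≤ 2 * s) {n m : ℕ}
    (hm : 2 * n + 1 ≤ m) :
    X ^ (n + 1) ∣ ∏ j ∈ range ((2 * s + 1) * m), jacobiFactor s i j - jacobiSeries s i := by
  rw [prod_range_jacobiFactor_eq_sum hi₁ hi₂ (by omega),
    ← sub_add_sub_cancel _ (∑ r ∈ range (2 * m + 1), jacobiTerm s i (r - m)), ← sum_sub_distrib]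
  refine dvd_add (dvd_sum fun r hr ↦ ?_) (X_pow_dvd_sum_jacobiTerm_sub hi₁ hi₂ (by omega))
  rw [← mul_sub_one]
  exact X_pow_dvd_jacobiTerm_mul_sub_one hi₁ hi₂ (by omega) (Nat.lt_succ_iff.mp (mem_range.mp hr))

theorem psHasProd_jacobiFactor (hi₁ : 1 ≤ i) (hi₂ : i ≤ 2 * s) :
    PSHasProd (jacobiFactor s i) (jacobiSeries s i) := by
  refine PSHasProd.of_exists_X_pow_dvd (fun j ↦ ?_) fun n ↦
    ⟨(2 * s + 1) * (2 * n + 1), by nlinarith, X_pow_dvd_prod_range_jacobiFactor_sub hi₁ hi₂ le_rfl⟩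
  unfold jacobiFactor
  split_ifs
  · exact X_pow_dvd_one_sub_pow_sub_one dvd_rfl le_rfl
  · simp

end Jacobi

theorem jacobi_triple_product_specialization_general (s i : ℕ) (hi1 : 1 ≤ i)
    (hi2 : i ≤ s) :
    (∀ k : ℤ, 0 ≤ expo s i k) ∧
    ∃ S : PowerSeries ℚ,
      PSHasSum (fun k : ℤ =>
        PowerSeries.C (R := ℚ) ((-1 : ℚ) ^ k) *
          (PowerSeries.X : PowerSeries ℚ) ^ (expo s i k).toNat) S ∧
      PSHasProd (fun n =>
        if (n + 1) % (2 * s + 1) = 0 ∨ (n + 1) % (2 * s + 1) = i ∨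
            ((n + 1) + i) % (2 * s + 1) = 0
        then 1 - (PowerSeries.X : PowerSeries ℚ) ^ (n + 1)
        else 1) S ∧
      ∃ T U : PowerSeries ℚ,
        PSHasProd (fun j => 1 - (PowerSeries.X : PowerSeries ℚ) ^ (j + 1)) T ∧
        PSHasProd (fun n =>
          if (n + 1) % (2 * s + 1) = 0 ∨ (n + 1) % (2 * s + 1) = i ∨
              ((n + 1) + i) % (2 * s + 1) = 0
          then 1
          else (1 - (PowerSeries.X : PowerSeries ℚ) ^ (n + 1))⁻¹) U ∧
        U = T⁻¹ * S := by
  have hi₂ : i ≤ 2 * s := by omega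
  have hT₀ : constantCoeff (pentagonalSeries ℚ) ≠ 0 := by
    rw [← coeff_zero_eq_constantCoeff_apply, show 0 = pentagonal 0 from rfl,
      coeff_pentagonalSeries_pentagonal]
    simp
  refine ⟨expo_nonneg hi1 hi₂, jacobiSeries s i, psHasSum_jacobiTerm hi1 hi₂,
    psHasProd_jacobiFactor hi1 hi₂, pentagonalSeries ℚ, _,
    psHasProd_one_sub_X_pow, psHasProd_one_sub_X_pow.of_mul ?_ hT₀, rfl⟩
  convert psHasProd_jacobiFactor hi1 hi₂ using 2 with n
  unfold jacobiFactor
  split_ifs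
  · exact mul_one _
  · exact PowerSeries.mul_inv_cancel (1 - X ^ (n + 1)) (by simp)

/-- Jacobi triple product specialization:
`Σ_{k ∈ ℤ} (−1)^k q^{(2s+1)k(k+1)/2 − ki} = Π_{n ≥ 1, n ≡ 0, ±i (mod 2s+1)} (1 − q^n)`,
the exponent being a nonnegative integer for every `k ∈ ℤ`; equivalently,
`Π_{n ≥ 1, n ≢ 0, ±i (mod 2s+1)} (1 − q^n)⁻¹
  = (Π_{j ≥ 1} (1 − q^j))⁻¹ · Σ_{k ∈ ℤ} (−1)^k q^{(2s+1)k(k+1)/2 − ki}`. -/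
theorem jacobi_triple_product_specialization (s i : ℕ) (hs : 1 ≤ s) (hi1 : 1 ≤ i)
    (hi2 : i ≤ s) :
    (∀ k : ℤ, 0 ≤ expo s i k) ∧
    ∃ S : PowerSeries ℚ,
      PSHasSum (fun k : ℤ =>
        PowerSeries.C (R := ℚ) ((-1 : ℚ) ^ k) *
          (PowerSeries.X : PowerSeries ℚ) ^ (expo s i k).toNat) S ∧
      PSHasProd (fun n =>
        if (n + 1) % (2 * s + 1) = 0 ∨ (n + 1) % (2 * s + 1) = i ∨
            ((n + 1) + i) % (2 * s + 1) = 0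
        then 1 - (PowerSeries.X : PowerSeries ℚ) ^ (n + 1)
        else 1) S ∧
      ∃ T U : PowerSeries ℚ,
        PSHasProd (fun j => 1 - (PowerSeries.X : PowerSeries ℚ) ^ (j + 1)) T ∧
        PSHasProd (fun n =>
          if (n + 1) % (2 * s + 1) = 0 ∨ (n + 1) % (2 * s + 1) = i ∨
              ((n + 1) + i) % (2 * s + 1) = 0
          then 1
          else (1 - (PowerSeries.X : PowerSeries ℚ) ^ (n + 1))⁻¹) U ∧
        U = T⁻¹ * S :=
  jacobi_triple_product_specialization_general s i hi1 hi2
end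

section
/- (Lemma 11: alternative description of P^{s,i}.) Let s be a positive integer and let i ∈ {1, …, s}. For every partition λ, the following are equivalent: (a) λ contains no partition belonging to R^{s,i} (i.e., λ ∈ P^{s,i}); (b) for every partition η ∈ R^{s,i}, the multiset of parts of η is not a submultiset of the multiset of parts of λ (equivalently, the monomial p_η does not divide the monomial p_λ, where p_μ denotes the product of the variables x_{μ_1} ⋯ x_{μ_m} indexed by the parts of μ). -/
/-!
Every `η ∈ R^{s,i}` is nonincreasing with all parts in `{k, k + 1}` for some `k`, so
`η = (k+1)^a k^b`. In a nonincreasing `λ` the parts equal to `k + 1` or `k` form one contiguous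
block `(k+1)^A k^B`, and the multiset of `η` lies in that of `λ` exactly when `a ≤ A` and `b ≤ B`,
which is exactly when `η` is a contiguous block of `λ`.
-/

/-- A list of natural numbers is a partition if it is nonincreasing
and all its parts are positive. -/
def IsPartition (l : List ℕ) : Prop :=
  l.Pairwise (· ≥ ·) ∧ ∀ x ∈ l, 0 < x

/-- The set `R^{s,i}`: partitions with exactly `s` parts whose largest and
smallest parts differ by at most one, together with the partition `[1^i]`. -/
def Rset (s i : ℕ) : Set (List ℕ) :=
  {η | IsPartition η ∧ η.length = s ∧ ∀ a ∈ η, ∀ b ∈ η, a ≤ b + 1}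
    ∪ {List.replicate i 1}

namespace List

variable {α : Type*}

theorem Pairwise.filter_prefix {R : α → α → Prop} {p : α → Bool} {l : List α}
    (hl : l.Pairwise R) (hp : ∀ x y, R x y → p y → p x) : l.filter p <+: l := by
  induction l with
  | nil => exact nil_prefix
  | cons x xs ih =>
    obtain ⟨hx, hxs⟩ := pairwise_cons.mp hl
    by_cases hpx : p x
    · rw [filter_cons_of_pos hpx]
      exact cons_prefix_cons.mpr ⟨rfl, ih hxs⟩
    · rw [filter_cons_of_neg hpx,
        filter_eq_nil_iff.mpr fun y hy hpy => hpx (hp x y (hx y hy) hpy)]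
      exact nil_prefix

theorem Pairwise.filter_suffix {R : α → α → Prop} {p : α → Bool} {l : List α}
    (hl : l.Pairwise R) (hp : ∀ x y, R x y → p x → p y) : l.filter p <:+ l := by
  induction l with
  | nil => exact nil_suffix
  | cons x xs ih =>
    obtain ⟨hx, hxs⟩ := pairwise_cons.mp hl
    by_cases hpx : p x
    · rw [filter_eq_self.mpr]
      rintro y (_ | ⟨_, hy⟩)
      · exact hpx
      · exact hp x y (hx y hy) hpx
    · rw [filter_cons_of_neg hpx]
      exact (ih hxs).trans (suffix_cons x xs)

theorem Pairwise.filter_Icc_infix [LinearOrder α] {l : List α} (hl : l.Pairwise (· ≥ ·))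
    (a b : α) : l.filter (fun x => a ≤ x && x ≤ b) <:+: l := by
  have hpre : l.filter (fun x => a ≤ x) <+: l :=
    hl.filter_prefix fun x y hxy hy => by simpa using (of_decide_eq_true hy).trans hxy
  have hsuf : (l.filter (fun x => a ≤ x)).filter (fun x => x ≤ b) <:+ l.filter (fun x => a ≤ x) :=
    (hl.filter _).filter_suffix fun x y hxy hx => by simpa using hxy.trans (of_decide_eq_true hx)
  rw [filter_filter] at hsuf
  simpa only [Bool.and_comm] using hsuf.isInfix.trans hpre.isInfix

theorem Pairwise.eq_replicate_append_replicate [LinearOrder α] {l : List α} {a b : α}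
    (hl : l.Pairwise (· ≥ ·)) (hba : b < a) (hab : ∀ x ∈ l, x = a ∨ x = b) :
    l = replicate (l.count a) a ++ replicate (l.count b) b := by
  refine Perm.eq_of_pairwise' hl ?_ ?_
  · simp only [pairwise_append, pairwise_replicate, mem_replicate]
    grind
  · rw [perm_iff_count]
    intro x
    simp only [count_append, count_replicate, beq_iff_eq]
    split_ifs with hxa hxb hxb
    · exact absurd (hxb.trans hxa.symm) hba.ne
    · simp [hxa]
    · simp [hxb]
    · exact count_eq_zero.mpr fun hx => (hab x hx).elim (hxa ∘ Eq.symm) (hxb ∘ Eq.symm)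

theorem replicate_append_replicate_infix {a b : α} {m n m' n' : ℕ} (hm : m ≤ m') (hn : n ≤ n') :
    replicate m a ++ replicate n b <:+: replicate m' a ++ replicate n' b :=
  ⟨replicate (m' - m) a, replicate (n' - n) b, by
    rw [append_assoc, append_assoc, ← replicate_add, ← append_assoc, ← replicate_add,
      Nat.sub_add_cancel hm, Nat.add_comm, Nat.sub_add_cancel hn]⟩

theorem infix_iff_subperm_of_forall_le_and_le_add_one {k : ℕ} {η l : List ℕ}
    (hl : l.Pairwise (· ≥ ·)) (hη : η.Pairwise (· ≥ ·)) (hk : ∀ x ∈ η, k ≤ x ∧ x ≤ k + 1) :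
    η <:+: l ↔ η <+~ l := by
  refine ⟨fun h => h.sublist.subperm, fun h => ?_⟩
  have two_blocks : ∀ m : List ℕ, m.Pairwise (· ≥ ·) → (∀ x ∈ m, k ≤ x ∧ x ≤ k + 1) →
      m = replicate (m.count (k + 1)) (k + 1) ++ replicate (m.count k) k :=
    fun m hm hmk => hm.eq_replicate_append_replicate k.lt_succ_self fun x hx => by
      have := hmk x hx; omega
  set t := l.filter (fun x => k ≤ x && x ≤ k + 1)
  have htk : ∀ x ∈ t, k ≤ x ∧ x ≤ k + 1 := by simp [t]
  have hηt : η <+~ t := by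
    have hηfix : η.filter (fun x => k ≤ x && x ≤ k + 1) = η :=
      filter_eq_self.mpr (by simpa using hk)
    exact hηfix ▸ h.filter _
  calc η = replicate (η.count (k + 1)) (k + 1) ++ replicate (η.count k) k := two_blocks η hη hk
    _ <:+: replicate (t.count (k + 1)) (k + 1) ++ replicate (t.count k) k :=
      replicate_append_replicate_infix (hηt.count_le _) (hηt.count_le _)
    _ = t := (two_blocks t (hl.filter _) htk).symm
    _ <:+: l := hl.filter_Icc_infix k (k + 1)

theorem exists_forall_le_and_le_add_one {η : List ℕ} (h : ∀ x ∈ η, ∀ y ∈ η, x ≤ y + 1) :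
    ∃ k, ∀ x ∈ η, k ≤ x ∧ x ≤ k + 1 := by
  cases hmin : η.min? with
  | none => exact ⟨0, by simp [min?_eq_none_iff.mp hmin]⟩
  | some k =>
    obtain ⟨hk, hkle⟩ := min?_eq_some_iff.mp hmin
    exact ⟨k, fun x hx => ⟨hkle x hx, h x hx k hk⟩⟩

end List

theorem pairwise_ge_and_forall_le_add_one_of_mem_Rset {s i : ℕ} {η : List ℕ}
    (hη : η ∈ Rset s i) :
    η.Pairwise (· ≥ ·) ∧ ∀ x ∈ η, ∀ y ∈ η, x ≤ y + 1 := by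
  rcases hη with ⟨⟨hsorted, -⟩, -, hspread⟩ | rfl
  · exact ⟨hsorted, hspread⟩
  · simp [List.pairwise_replicate, List.mem_replicate]

theorem alternative_description_of_P_general (s i : ℕ) (l : List ℕ) (hl : IsPartition l) :
    (∀ η ∈ Rset s i, ¬ η <:+: l) ↔
      ∀ η ∈ Rset s i, ¬ (↑η : Multiset ℕ) ≤ (↑l : Multiset ℕ) := by
  refine forall₂_congr fun η hη => not_congr ?_
  obtain ⟨hηsorted, hspread⟩ := pairwise_ge_and_forall_le_add_one_of_mem_Rset hη
  obtain ⟨k, hk⟩ := List.exists_forall_le_and_le_add_one hspread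
  rw [Multiset.coe_le]
  exact List.infix_iff_subperm_of_forall_le_and_le_add_one hl.1 hηsorted hk

/-- Lemma 11: a partition `λ` contains (as a contiguous subsequence) no
partition of `R^{s,i}` if and only if for every `η ∈ R^{s,i}` the multiset of
parts of `η` is not a submultiset of the multiset of parts of `λ`
(equivalently, the monomial `p_η` does not divide `p_λ`). -/
theorem alternative_description_of_P (s i : ℕ) (hs : 1 ≤ s) (hi1 : 1 ≤ i)
    (hi2 : i ≤ s) (l : List ℕ) (hl : IsPartition l) :
    (∀ η ∈ Rset s i, ¬ η <:+: l) ↔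
      ∀ η ∈ Rset s i, ¬ (↑η : Multiset ℕ) ≤ (↑l : Multiset ℕ) :=
  alternative_description_of_P_general s i l hl
end
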